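/- Let f be a filter function and A Hermitian with eigenvalues λ_1, …, λ_n. In subspace iteration with subspace dimension m₀ applied to f(A), if |f(λ_{m₀})| > |f(λ_{m₀+1})| (eigenvalues ordered by decreasing |f|), then the acute principal angles θ_k^{(j)} between the j-th iterate subspace and the dominant m₀-dimensional invariant subspace satisfy tan θ_k^{(j)} ≤ (|f(λ_{m₀+1})|/|f(λ_{m₀})|)^j tan θ_k^{(0)}, assuming the initial subspace has all principal angles < π/2. -/

import Mathlib

open Matrix

/-!
In the eigenbasis `e` of `A`, the matrix `f(A)ʲ` multiplies the `k`-th coefficient of a vector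
by `f(λₖ)ʲ`. Projecting onto `U` keeps exactly the first `m₀` coefficients, where
`|f(λₖ)|ʲ ≥ |f(λ_{m₀-1})|ʲ`, and the residual keeps the others, where `|f(λₖ)|ʲ ≤ |f(λ_{m₀})|ʲ`.
By Parseval, the residual norm therefore shrinks at least by the factor `|f(λ_{m₀})|ʲ` and the
projected norm grows at least by the factor `|f(λ_{m₀-1})|ʲ`; the two estimates combine into
the tangent bound.
-/

section

variable {𝕜 E ι : Type*} [RCLike 𝕜] [NormedAddCommGroup E] [InnerProductSpace 𝕜 E]

theorem Finset.sum_norm_mul_sq_le {s : Finset ι} {μ c : ι → 𝕜} {a : ℝ}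
    (hμ : ∀ i ∈ s, ‖μ i‖ ≤ a) :
    ∑ i ∈ s, ‖μ i * c i‖ ^ 2 ≤ a ^ 2 * ∑ i ∈ s, ‖c i‖ ^ 2 := by
  rw [Finset.mul_sum]
  gcongr with i hi
  rw [norm_mul, mul_pow]
  gcongr
  exact hμ i hi

theorem Finset.sq_mul_sum_norm_sq_le {s : Finset ι} {μ c : ι → 𝕜} {b : ℝ} (hb : 0 ≤ b)
    (hμ : ∀ i ∈ s, b ≤ ‖μ i‖) :
    b ^ 2 * ∑ i ∈ s, ‖c i‖ ^ 2 ≤ ∑ i ∈ s, ‖μ i * c i‖ ^ 2 := by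
  rw [Finset.mul_sum]
  gcongr with i hi
  rw [norm_mul, mul_pow]
  gcongr
  exact hμ i hi

theorem Module.End.inner_pow_apply_of_inner_apply {L : Module.End 𝕜 E} {u : E} {c : 𝕜}
    (h : ∀ x, inner 𝕜 u (L x) = c * inner 𝕜 u x) (j : ℕ) (x : E) :
    inner 𝕜 u ((L ^ j) x) = c ^ j * inner 𝕜 u x := by
  induction j with
  | zero => simp
  | succ j ih => rw [pow_succ', Module.End.mul_apply, h, ih, pow_succ', mul_assoc]

variable [DecidableEq E] {v : ι → E}

theorem Orthonormal.norm_sq_starProjection_span_image (hv : Orthonormal 𝕜 v) (s : Finset ι)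
    (x : E) :
    ‖(Submodule.span 𝕜 (s.image v : Set E)).starProjection x‖ ^ 2
      = ∑ i ∈ s, ‖inner 𝕜 (v i) x‖ ^ 2 := by
  rw [Submodule.starProjection_apply, Submodule.norm_coe,
    ← (OrthonormalBasis.span hv s).sum_sq_norm_inner_right, ← Finset.sum_coe_sort s]
  simp

theorem Orthonormal.mul_norm_starProjection_span_image_le (hv : Orthonormal 𝕜 v)
    (s : Finset ι) {μ : ι → 𝕜} {x y : E}
    (hxy : ∀ i ∈ s, inner 𝕜 (v i) y = μ i * inner 𝕜 (v i) x)
    {b : ℝ} (hb : 0 ≤ b) (hμ : ∀ i ∈ s, b ≤ ‖μ i‖) :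
    b * ‖(Submodule.span 𝕜 (s.image v : Set E)).starProjection x‖
      ≤ ‖(Submodule.span 𝕜 (s.image v : Set E)).starProjection y‖ := by
  rw [← pow_le_pow_iff_left₀ (by positivity) (norm_nonneg _) two_ne_zero, mul_pow,
    hv.norm_sq_starProjection_span_image, hv.norm_sq_starProjection_span_image,
    Finset.sum_congr rfl fun i hi => congrArg (‖·‖ ^ 2) (hxy i hi)]
  exact Finset.sq_mul_sum_norm_sq_le hb hμ

variable [Fintype ι] [DecidableEq ι]

theorem OrthonormalBasis.norm_sq_sub_starProjection_span_image (e : OrthonormalBasis ι 𝕜 E)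
    (s : Finset ι) (x : E) :
    ‖x - (Submodule.span 𝕜 (s.image e : Set E)).starProjection x‖ ^ 2
      = ∑ i ∈ sᶜ, ‖inner 𝕜 (e i) x‖ ^ 2 := by
  have hpyth := (Submodule.span 𝕜 (s.image e : Set E)).norm_sq_eq_add_norm_sq_starProjection x
  rw [Submodule.starProjection_orthogonal', ← e.sum_sq_norm_inner_right,
    e.orthonormal.norm_sq_starProjection_span_image, ← Finset.sum_add_sum_compl s,
    _root_.sub_apply, one_apply_eq_self] at hpyth
  exact (add_left_cancel hpyth).symm

theorem OrthonormalBasis.norm_sub_starProjection_span_image_le (e : OrthonormalBasis ι 𝕜 E)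
    (s : Finset ι) {μ : ι → 𝕜} {x y : E}
    (hxy : ∀ i ∈ sᶜ, inner 𝕜 (e i) y = μ i * inner 𝕜 (e i) x)
    {a : ℝ} (ha : 0 ≤ a) (hμ : ∀ i ∈ sᶜ, ‖μ i‖ ≤ a) :
    ‖y - (Submodule.span 𝕜 (s.image e : Set E)).starProjection y‖
      ≤ a * ‖x - (Submodule.span 𝕜 (s.image e : Set E)).starProjection x‖ := by
  rw [← pow_le_pow_iff_left₀ (norm_nonneg _) (by positivity) two_ne_zero, mul_pow,
    e.norm_sq_sub_starProjection_span_image, e.norm_sq_sub_starProjection_span_image,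
    Finset.sum_congr rfl fun i hi => congrArg (‖·‖ ^ 2) (hxy i hi)]
  exact Finset.sum_norm_mul_sq_le hμ

end

section

variable {𝕜 ι κ : Type*} [RCLike 𝕜] [Fintype ι] [DecidableEq ι] [Fintype κ]

theorem Matrix.toEuclideanLin_vecMulVec_star (u x : EuclideanSpace 𝕜 ι) :
    toEuclideanLin (vecMulVec (fun i => u i) (fun j => star (u j))) x = inner 𝕜 u x • u := by
  ext i
  simp [toLpLin_apply, vecMulVec_mulVec, EuclideanSpace.inner_eq_star_dotProduct,
    dotProduct_comm, Pi.star_def]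

theorem Orthonormal.inner_toEuclideanLin_sum_smul_vecMulVec {v : κ → EuclideanSpace 𝕜 ι}
    (hv : Orthonormal 𝕜 v) (μ : κ → 𝕜) (k : κ) (x : EuclideanSpace 𝕜 ι) :
    inner 𝕜 (v k)
        (toEuclideanLin (∑ l, μ l • vecMulVec (fun i => v l i) (fun j => star (v l j))) x)
      = μ k * inner 𝕜 (v k) x := by
  simp only [map_sum, map_smul, LinearMap.sum_apply, LinearMap.smul_apply,
    toEuclideanLin_vecMulVec_star, smul_smul]
  rw [hv.inner_right_fintype]

theorem Orthonormal.inner_toEuclideanLin_pow_sum_smul_vecMulVec {v : κ → EuclideanSpace 𝕜 ι}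
    (hv : Orthonormal 𝕜 v) (μ : κ → 𝕜) (k : κ) (j : ℕ) (x : EuclideanSpace 𝕜 ι) :
    inner 𝕜 (v k)
        (toEuclideanLin ((∑ l, μ l • vecMulVec (fun i => v l i) (fun j => star (v l j))) ^ j) x)
      = μ k ^ j * inner 𝕜 (v k) x := by
  rw [toLpLin_pow]
  exact Module.End.inner_pow_apply_of_inner_apply
    (hv.inner_toEuclideanLin_sum_smul_vecMulVec μ k) j x

end

/-- Tangent-based convergence bound for filtered subspace iteration: with `U` the
dominant invariant subspace of `f(A)` (span of eigenvectors with the `m₀` largest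
values of `|f(λ)|`, with `|f(λ_{m₀})| > |f(λ_{m₀+1})|`) and initial subspace `X₀`
having all principal angles to `U` less than `π/2`, each vector `v` in the iterate
subspaces satisfies the tangent bound
`tan θ(f(A)ʲv) ≤ (|f(λ_{m₀+1})|/|f(λ_{m₀})|)ʲ · tan θ(v)`, stated in product form via
the orthogonal projection onto `U`. -/
theorem stmt_19 {n m₀ : ℕ} (A : Matrix (Fin n) (Fin n) ℂ) (hA : A.IsHermitian)
    (f : ℝ → ℝ) (hm : m₀ < n)
    (hord : ∀ j k : Fin n, j ≤ k → |f (hA.eigenvalues k)| ≤ |f (hA.eigenvalues j)|)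
    (hgap : |f (hA.eigenvalues ⟨m₀, hm⟩)| < |f (hA.eigenvalues ⟨m₀ - 1, by omega⟩)|)
    (fA : Matrix (Fin n) (Fin n) ℂ)
    (hfA : fA = ∑ k, (f (hA.eigenvalues k) : ℂ) •
      Matrix.vecMulVec (fun i => hA.eigenvectorBasis k i)
        (fun j => star (hA.eigenvectorBasis k j)))
    (U : Submodule ℂ (EuclideanSpace ℂ (Fin n)))
    (hU : U = Submodule.span ℂ {v | ∃ k : Fin n, (k : ℕ) < m₀ ∧ v = hA.eigenvectorBasis k})
    (X₀ : Submodule ℂ (EuclideanSpace ℂ (Fin n))) :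
    ∀ (j : ℕ), ∀ v ∈ X₀,
      ‖Matrix.toEuclideanLin (fA ^ j) v -
          (U.orthogonalProjectionOnto (Matrix.toEuclideanLin (fA ^ j) v) : EuclideanSpace ℂ (Fin n))‖
        * ‖(U.orthogonalProjectionOnto v : EuclideanSpace ℂ (Fin n))‖
      ≤ (|f (hA.eigenvalues ⟨m₀, hm⟩)| / |f (hA.eigenvalues ⟨m₀ - 1, by omega⟩)|) ^ j
        * (‖v - (U.orthogonalProjectionOnto v : EuclideanSpace ℂ (Fin n))‖
            * ‖(U.orthogonalProjectionOnto (Matrix.toEuclideanLin (fA ^ j) v) : EuclideanSpace ℂ (Fin n))‖) := by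
  intro j v _
  set e := hA.eigenvectorBasis
  set s : Finset (Fin n) := {k | (k : ℕ) < m₀}
  obtain rfl : U = Submodule.span ℂ (s.image e : Set (EuclideanSpace ℂ (Fin n))) := by
    rw [hU]
    congr 1
    ext x
    simp [s, eq_comm]
  set P := (Submodule.span ℂ (s.image e : Set (EuclideanSpace ℂ (Fin n)))).starProjection
  have hcoef (k : Fin n) : inner ℂ (e k) (toEuclideanLin (fA ^ j) v)
      = (f (hA.eigenvalues k) : ℂ) ^ j * inner ℂ (e k) v :=
    hfA ▸ e.orthonormal.inner_toEuclideanLin_pow_sum_smul_vecMulVec _ k j v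
  set w := toEuclideanLin (fA ^ j) v
  have hnorm (k : Fin n) : ‖(f (hA.eigenvalues k) : ℂ) ^ j‖ = |f (hA.eigenvalues k)| ^ j := by
    rw [norm_pow, Complex.norm_real, Real.norm_eq_abs]
  set a := |f (hA.eigenvalues ⟨m₀, hm⟩)|
  set b := |f (hA.eigenvalues ⟨m₀ - 1, by omega⟩)|
  have hb : 0 < b := (abs_nonneg _).trans_lt hgap
  have hres : ‖w - P w‖ ≤ a ^ j * ‖v - P v‖ :=
    e.norm_sub_starProjection_span_image_le s (fun k _ => hcoef k) (by positivity) fun k hk => by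
      rw [hnorm]
      exact pow_le_pow_left₀ (abs_nonneg _) (hord _ _ (by simpa [s, Fin.le_def] using hk)) j
  have hproj : b ^ j * ‖P v‖ ≤ ‖P w‖ :=
    e.orthonormal.mul_norm_starProjection_span_image_le s (fun k _ => hcoef k) (by positivity)
      fun k hk => by
        rw [hnorm]
        exact pow_le_pow_left₀ hb.le (hord _ _ (by simp [s, Fin.le_def] at hk ⊢; omega)) j
  simp only [← Submodule.starProjection_apply, div_pow]
  calc ‖w - P w‖ * ‖P v‖ ≤ a ^ j * ‖v - P v‖ * ‖P v‖ := by gcongr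
    _ = a ^ j / b ^ j * (‖v - P v‖ * (b ^ j * ‖P v‖)) := by field_simp
    _ ≤ a ^ j / b ^ j * (‖v - P v‖ * ‖P w‖) := by gcongr
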